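/- arXiv:1210.6611 — 2 statements merged into one kernel-verified Lean document; each statement's English description precedes it below -/
import Mathlib

section
/- Let F : (0,∞) → ℝ be a C¹ function such that F(z)/z → a as z → ∞ for some a < 0, and inf_{z>0} F′(z) > −∞. Then there exists a nonnegative integer k₀ such that for every integer k ≥ k₀ the equation cot z = F(z) has exactly one solution z in the interval (kπ, (k+1)π). -/
/-!
Since `F z / z → a < 0`, `F → -∞`; so if `m ≤ F'`, then for large `k` we have `F ≤ -|m|` on
`(kπ, (k+1)π)`. A solution exists by the intermediate value theorem. At a solution `z₀`,
`cot z₀ = F z₀ ≤ -|m|`, and as `cot` decreases, `cot ≤ -|m|` to the right of `z₀`, where therefore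
`(cot - F)' = -(1 + cot²) - F' ≤ -(1 + |m|²) + |m| < 0`: `cot - F` cannot vanish again.
-/

open Set Filter Real

lemma tendsto_atBot_of_tendsto_div_of_neg {F : ℝ → ℝ} {a : ℝ} (ha : a < 0)
    (h : Tendsto (fun z => F z / z) atTop (nhds a)) : Tendsto F atTop atBot :=
  (h.neg_mul_atTop ha tendsto_id).congr' <|
    (eventually_ne_atTop 0).mono fun z hz => div_mul_cancel₀ (F z) hz

lemma sin_ne_zero_of_mem_Ioo_int_mul_pi {k : ℤ} {z : ℝ} (hz : z ∈ Ioo (k * π) ((k + 1) * π)) :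
    sin z ≠ 0 := by
  rw [sin_ne_zero_iff]
  rintro n rfl
  have hkn : (k : ℝ) < n := lt_of_mul_lt_mul_right hz.1 pi_pos.le
  have hnk : (n : ℝ) < k + 1 := lt_of_mul_lt_mul_right hz.2 pi_pos.le
  norm_cast at hkn hnk
  omega

lemma hasDerivAt_cot {x : ℝ} (hx : sin x ≠ 0) : HasDerivAt cot (-(1 + cot x ^ 2)) x := by
  have h : HasDerivAt (fun x => cos x / sin x) ((-sin x * sin x - cos x * cos x) / sin x ^ 2) x :=
    (hasDerivAt_cos x).div (hasDerivAt_sin x) hx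
  rw [show cot = fun x => cos x / sin x from funext cot_eq_cos_div_sin]
  convert h using 1
  field_simp
  nlinarith [cos_sq_add_sin_sq x]

lemma strictAntiOn_cot_Ioo_int_mul_pi (k : ℤ) : StrictAntiOn cot (Ioo (k * π) ((k + 1) * π)) := by
  have hderiv : ∀ x ∈ Ioo (k * π) ((k + 1) * π), HasDerivAt cot (-(1 + cot x ^ 2)) x :=
    fun x hx => hasDerivAt_cot (sin_ne_zero_of_mem_Ioo_int_mul_pi hx)
  refine strictAntiOn_of_deriv_neg (convex_Ioo _ _)
    (fun x hx => (hderiv x hx).continuousAt.continuousWithinAt) fun x hx => ?_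
  rw [interior_Ioo] at hx
  rw [(hderiv x hx).deriv]
  exact neg_neg_of_pos (by positivity)

/-- `cot - F` changes sign on `[kπ, (k+1)π]` because `cos z - F z * sin z` takes the values
`±cos (kπ) = ±1` at the endpoints. -/
lemma exists_cot_eq_of_continuousOn {F : ℝ → ℝ} (k : ℤ)
    (hF : ContinuousOn F (Icc (k * π) ((k + 1) * π))) :
    ∃ z ∈ Ioo (k * π) ((k + 1) * π), cot z = F z := by
  set h : ℝ → ℝ := fun z => cos z - F z * sin z
  have hle : k * π ≤ (k + 1) * π := by nlinarith [pi_pos]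
  have h_left : h (k * π) = cos (k * π) := by simp [h, sin_int_mul_pi]
  have h_right : h ((k + 1) * π) = -cos (k * π) := by
    simp [h, add_mul, cos_add_pi]
  have hcos : cos (k * π) ≠ 0 := by
    rw [cos_int_mul_pi]; exact zpow_ne_zero _ (by norm_num)
  have h_cont : ContinuousOn h (uIcc (k * π) ((k + 1) * π)) := by
    rw [uIcc_of_le hle]; exact continuousOn_cos.sub (hF.mul continuousOn_sin)
  have h_zero : (0 : ℝ) ∈ uIcc (h (k * π)) (h ((k + 1) * π)) := by
    rw [h_left, h_right, mem_uIcc]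
    rcases le_total 0 (cos (k * π)) with H | H
    · right; constructor <;> linarith
    · left; constructor <;> linarith
  obtain ⟨z, hz, hz0⟩ := intermediate_value_uIcc h_cont h_zero
  rw [uIcc_of_le hle] at hz
  have hz' : z ∈ Ioo (k * π) ((k + 1) * π) := by
    refine ⟨lt_of_le_of_ne hz.1 ?_, lt_of_le_of_ne hz.2 ?_⟩ <;> rintro rfl <;> simp_all
  refine ⟨z, hz', ?_⟩
  rw [cot_eq_cos_div_sin, div_eq_iff (sin_ne_zero_of_mem_Ioo_int_mul_pi hz')]
  simp only [h] at hz0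
  linarith

lemma strictAntiOn_cot_sub {F : ℝ → ℝ} {c z₀ : ℝ} {k : ℤ} (hc : 0 ≤ c)
    (hF : DifferentiableOn ℝ F (Ioo (k * π) ((k + 1) * π)))
    (hF' : ∀ z ∈ Ioo (k * π) ((k + 1) * π), -(1 + c ^ 2) < deriv F z)
    (hz₀ : z₀ ∈ Ioo (k * π) ((k + 1) * π)) (hcot : cot z₀ ≤ -c) :
    StrictAntiOn (fun z => cot z - F z) (Ico z₀ ((k + 1) * π)) := by
  have hsub : Ico z₀ ((k + 1) * π) ⊆ Ioo (k * π) ((k + 1) * π) :=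
    fun z hz => ⟨hz₀.1.trans_le hz.1, hz.2⟩
  have hderiv : ∀ z ∈ Ico z₀ ((k + 1) * π),
      HasDerivAt (fun z => cot z - F z) (-(1 + cot z ^ 2) - deriv F z) z := fun z hz =>
    (hasDerivAt_cot (sin_ne_zero_of_mem_Ioo_int_mul_pi (hsub hz))).sub
      ((hF z (hsub hz)).differentiableAt (isOpen_Ioo.mem_nhds (hsub hz))).hasDerivAt
  refine strictAntiOn_of_deriv_neg (convex_Ico _ _)
    (fun z hz => (hderiv z hz).continuousAt.continuousWithinAt) fun z hz => ?_
  rw [interior_Ico] at hz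
  have hcot_z : cot z < -c :=
    ((strictAntiOn_cot_Ioo_int_mul_pi k) hz₀ (hsub (Ioo_subset_Ico_self hz)) hz.1).trans_le hcot
  rw [(hderiv z (Ioo_subset_Ico_self hz)).deriv]
  nlinarith [hF' z (hsub (Ioo_subset_Ico_self hz))]

theorem existsUnique_cot_eq {F : ℝ → ℝ} {c : ℝ} (k : ℤ) (hc : 0 ≤ c)
    (hF_cont : ContinuousOn F (Icc (k * π) ((k + 1) * π)))
    (hF_diff : DifferentiableOn ℝ F (Ioo (k * π) ((k + 1) * π)))
    (hF_le : ∀ z ∈ Ioo (k * π) ((k + 1) * π), F z ≤ -c)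
    (hF' : ∀ z ∈ Ioo (k * π) ((k + 1) * π), -(1 + c ^ 2) < deriv F z) :
    ∃! z, z ∈ Ioo (k * π) ((k + 1) * π) ∧ cot z = F z := by
  obtain ⟨z, hz, hz_eq⟩ := exists_cot_eq_of_continuousOn k hF_cont
  have h_le_eq : ∀ z₁ z₂, z₁ ∈ Ioo (k * π) ((k + 1) * π) ∧ cot z₁ = F z₁ →
      z₂ ∈ Ioo (k * π) ((k + 1) * π) ∧ cot z₂ = F z₂ → z₁ ≤ z₂ → z₁ = z₂ := by
    rintro z₁ z₂ ⟨hz₁, hz₁_eq⟩ ⟨hz₂, hz₂_eq⟩ h₁₂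
    refine (strictAntiOn_cot_sub hc hF_diff hF' hz₁ (hz₁_eq ▸ hF_le z₁ hz₁)).injOn
      ⟨le_rfl, hz₁.2⟩ ⟨h₁₂, hz₂.2⟩ ?_
    simp only [hz₁_eq, hz₂_eq, sub_self]
  refine ⟨z, ⟨hz, hz_eq⟩, fun y hy => ?_⟩
  rcases le_total y z with h | h
  · exact h_le_eq y z hy ⟨hz, hz_eq⟩ h
  · exact (h_le_eq z y ⟨hz, hz_eq⟩ hy h).symm

/-- Lemma `unique`. If `F ∈ C¹(0,∞)`, `F(z) ∼ az` as `z → ∞` with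
`a < 0`, and `inf F′ > -∞`, then for all sufficiently large `k` the equation
`cot z = F(z)` has exactly one solution in `(kπ, (k+1)π)`. -/
theorem unique_solution_cot_eq
    (F : ℝ → ℝ) (hF : ContDiffOn ℝ 1 F (Set.Ioi 0))
    (a : ℝ) (ha : a < 0)
    (hlim : Filter.Tendsto (fun z => F z / z) Filter.atTop (nhds a))
    (hinf : ∃ m : ℝ, ∀ z > 0, m ≤ deriv F z) :
    ∃ k₀ : ℕ, ∀ k ≥ k₀, ∃! z : ℝ,
      z ∈ Set.Ioo ((k : ℝ) * Real.pi) (((k : ℝ) + 1) * Real.pi) ∧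
      Real.cos z / Real.sin z = F z := by
  obtain ⟨m, hm⟩ := hinf
  obtain ⟨Z, hZ⟩ := eventually_atTop.1 <|
    tendsto_atBot.1 (tendsto_atBot_of_tendsto_div_of_neg ha hlim) (-|m|)
  obtain ⟨k₀, hk₀⟩ := eventually_atTop.1 <|
    (tendsto_natCast_atTop_atTop.atTop_mul_const pi_pos).eventually_gt_atTop (max Z 0)
  refine ⟨k₀, fun k hk => ?_⟩
  have hkπ := max_lt_iff.1 (hk₀ k hk)
  have h_pos : Icc (((k : ℤ) : ℝ) * π) (((k : ℤ) + 1) * π) ⊆ Ioi 0 := fun z hz => by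
    push_cast at hz; exact hkπ.2.trans_le hz.1
  have hF_diff := (hF.differentiableOn one_ne_zero).mono (Ioo_subset_Icc_self.trans h_pos)
  have hm' : -(1 + |m| ^ 2) < m := by nlinarith [neg_abs_le m, sq_nonneg (|m| - 1)]
  simpa [cot_eq_cos_div_sin] using existsUnique_cot_eq k (abs_nonneg m)
    (hF.continuousOn.mono h_pos) hF_diff
    (fun z hz => hZ z (by push_cast at hz; linarith [hz.1]))
    (fun z hz => hm'.trans_le (hm z (h_pos (Ioo_subset_Icc_self hz))))
end

section
/- Let F : (0,∞) → ℝ be a C¹ function such that F(z)/z → a as z → ∞ for some a > 0, and sup_{z>0} F′(z) < ∞. Then there exists a nonnegative integer k₀ such that for every integer k ≥ k₀ the equation tan z = F(z) has exactly one solution z in the interval ((k − 1/2)π, (k + 1/2)π). -/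
/-!
On the branch `((k - 1/2)π, (k + 1/2)π)` the tangent increases from `-∞` to `+∞`, so it meets
the graph of the continuous function `F` at least once. Since `F z / z → a > 0`, on far-out
branches `F ≥ max M 0`, where `M` bounds `F'`. Between two crossings Rolle's theorem would give
a point `c` with `1 + tan² c = F'(c) ≤ M`; but `tan` is increasing on the branch, so
`tan c > F(z₁) ≥ max M 0`, and then `1 + tan² c > M`.
-/

open Set Filter Real

namespace Real

theorem sub_int_mul_pi_mem_Ioo {k : ℤ} {z : ℝ}
    (hz : z ∈ Ioo ((k - 1 / 2) * π) ((k + 1 / 2) * π)) :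
    z - k * π ∈ Ioo (-(π / 2)) (π / 2) :=
  ⟨by linarith [hz.1], by linarith [hz.2]⟩

theorem cos_ne_zero_of_mem_Ioo_int_mul_pi {k : ℤ} {z : ℝ}
    (hz : z ∈ Ioo ((k - 1 / 2) * π) ((k + 1 / 2) * π)) : cos z ≠ 0 := by
  have hpos := cos_pos_of_mem_Ioo (sub_int_mul_pi_mem_Ioo hz)
  rw [cos_sub_int_mul_pi] at hpos
  rintro hz0
  simp [hz0] at hpos

theorem strictMonoOn_tan_Ioo_int_mul_pi (k : ℤ) :
    StrictMonoOn tan (Ioo ((k - 1 / 2) * π) ((k + 1 / 2) * π)) := by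
  intro x hx y hy hxy
  rw [← tan_sub_int_mul_pi x k, ← tan_sub_int_mul_pi y k]
  exact strictMonoOn_tan (sub_int_mul_pi_mem_Ioo hx) (sub_int_mul_pi_mem_Ioo hy) (by linarith)

theorem exists_tan_eq_of_continuousOn (k : ℤ) {F : ℝ → ℝ}
    (hF : ContinuousOn F (Icc ((k - 1 / 2) * π) ((k + 1 / 2) * π))) :
    ∃ z ∈ Ioo ((k - 1 / 2) * π) ((k + 1 / 2) * π), tan z = F z := by
  -- `tan z = F z` on the branch is the equation `z - kπ = arctan (F z)`, which has bounded sides.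
  set g : ℝ → ℝ := fun z => z - k * π - arctan (F z)
  have hg : ContinuousOn g (Icc ((k - 1 / 2) * π) ((k + 1 / 2) * π)) :=
    (continuousOn_id.sub continuousOn_const).sub (continuous_arctan.comp_continuousOn hF)
  have hleft : g ((k - 1 / 2) * π) < 0 := by
    have := neg_pi_div_two_lt_arctan (F ((k - 1 / 2) * π))
    simp only [g]
    linarith
  have hright : 0 < g ((k + 1 / 2) * π) := by
    have := arctan_lt_pi_div_two (F ((k + 1 / 2) * π))
    simp only [g]
    linarith
  obtain ⟨z, hz, hgz⟩ := intermediate_value_Ioo (by linarith [pi_pos]) hg ⟨hleft, hright⟩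
  have harctan : z - k * π = arctan (F z) := by
    simp only [g] at hgz
    linarith
  exact ⟨z, hz, by rw [← tan_sub_int_mul_pi z k, harctan, tan_arctan]⟩

theorem subsingleton_tan_eq (k : ℤ) {F : ℝ → ℝ} {M : ℝ}
    (hF : DifferentiableOn ℝ F (Ioo ((k - 1 / 2) * π) ((k + 1 / 2) * π)))
    (hF' : ∀ z ∈ Ioo ((k - 1 / 2) * π) ((k + 1 / 2) * π), deriv F z ≤ M)
    (hFM : ∀ z ∈ Ioo ((k - 1 / 2) * π) ((k + 1 / 2) * π), max M 0 ≤ F z) :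
    {z ∈ Ioo ((k - 1 / 2) * π) ((k + 1 / 2) * π) | tan z = F z}.Subsingleton := by
  set I := Ioo ((k - 1 / 2) * π) ((k + 1 / 2) * π)
  intro z₁ h₁ z₂ h₂
  by_contra hne
  wlog hlt : z₁ < z₂ generalizing z₁ z₂
  · exact this h₂ h₁ (Ne.symm hne) (lt_of_le_of_ne (not_lt.1 hlt) (Ne.symm hne))
  have hsub : Icc z₁ z₂ ⊆ I := Icc_subset_Ioo h₁.1.1 h₂.1.2
  have hderiv : ∀ c ∈ I, HasDerivAt (fun z => tan z - F z) (1 + tan c ^ 2 - deriv F c) c := by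
    intro c hc
    have hcos := cos_ne_zero_of_mem_Ioo_int_mul_pi hc
    have h := (hasDerivAt_tan hcos).sub (hF.differentiableAt (isOpen_Ioo.mem_nhds hc)).hasDerivAt
    rwa [one_div, ← inv_one_add_tan_sq hcos, inv_inv] at h
  obtain ⟨c, hc, hc0⟩ := exists_hasDerivAt_eq_zero hlt
    (fun z hz => (hderiv z (hsub hz)).continuousAt.continuousWithinAt)
    (by rw [h₁.2, h₂.2, sub_self, sub_self])
    (fun z hz => hderiv z (hsub (Ioo_subset_Icc_self hz)))
  have hcI : c ∈ I := hsub (Ioo_subset_Icc_self hc)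
  have htan : F z₁ < tan c := h₁.2 ▸ strictMonoOn_tan_Ioo_int_mul_pi k h₁.1 hcI hc.1
  nlinarith [hFM z₁ h₁.1, hF' c hcI, le_max_left M 0, le_max_right M 0]

end Real

theorem tendsto_natCast_sub_half_mul_pi_atTop :
    Tendsto (fun k : ℕ => ((k : ℝ) - 1 / 2) * π) atTop atTop :=
  (tendsto_atTop_add_const_right _ (-(1 / 2)) tendsto_natCast_atTop_atTop).atTop_mul_const pi_pos

/-- Lemma `unique1`. If `F ∈ C¹(0,∞)`, `F(z) ∼ az` as `z → ∞` with
`a > 0`, and `sup F′ < ∞`, then for all sufficiently large `k` the equation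
`tan z = F(z)` has exactly one solution in `((k - 1/2)π, (k + 1/2)π)`. -/
theorem unique_solution_tan_eq
    (F : ℝ → ℝ) (hF : ContDiffOn ℝ 1 F (Set.Ioi 0))
    (a : ℝ) (ha : 0 < a)
    (hlim : Filter.Tendsto (fun z => F z / z) Filter.atTop (nhds a))
    (hsup : ∃ M : ℝ, ∀ z > 0, deriv F z ≤ M) :
    ∃ k₀ : ℕ, ∀ k ≥ k₀, ∃! z : ℝ,
      z ∈ Set.Ioo (((k : ℝ) - 1 / 2) * Real.pi) (((k : ℝ) + 1 / 2) * Real.pi) ∧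
      Real.tan z = F z := by
  obtain ⟨M, hM⟩ := hsup
  obtain ⟨R, hR⟩ :=
    ((tendsto_id.num ha hlim).eventually_ge_atTop (max M 0)).exists_forall_of_atTop
  obtain ⟨k₀, hk₀⟩ :=
    (tendsto_natCast_sub_half_mul_pi_atTop.eventually_gt_atTop (max R 0)).exists_forall_of_atTop
  refine ⟨k₀, fun k hk => ?_⟩
  have hRk := hk₀ k hk
  have hIcc : Icc (((k : ℝ) - 1 / 2) * π) (((k : ℝ) + 1 / 2) * π) ⊆ Ioi 0 :=
    fun z hz => (le_max_right R 0).trans_lt (hRk.trans_le hz.1)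
  have hIoo := Ioo_subset_Icc_self.trans hIcc
  have hexists := exists_tan_eq_of_continuousOn k (F := F)
  have hunique := subsingleton_tan_eq k (F := F) (M := M)
  simp only [Int.cast_natCast] at hexists hunique
  obtain ⟨z, hz, hzF⟩ := hexists (hF.continuousOn.mono hIcc)
  refine ⟨z, ⟨hz, hzF⟩, fun y hy => hunique ((hF.differentiableOn one_ne_zero).mono hIoo)
    (fun w hw => hM w (hIoo hw)) (fun w hw => hR w ((le_max_left R 0).trans (hRk.trans hw.1).le))
    hy ⟨hz, hzF⟩⟩
end
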